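/- arXiv:1402.5550 — 3 statements merged into one kernel-verified Lean document; each statement's English description precedes it below -/
import Mathlib

section
/- For every x in (0,1), the sum over n ≥ 0 of ((1+n)/log(e(1+n))) · x^(2n) is comparable (up to absolute constants) to 1/((1-x²)² · log(e/(1-x²))); that is, there exist constants c, C > 0 independent of x such that c/((1-x²)²·log(e/(1-x²))) ≤ ∑_{n≥0} ((1+n)/log(e(1+n))) x^(2n) ≤ C/((1-x²)²·log(e/(1-x²))). -/
open Real
set_option maxHeartbeats 1000000

noncomputable def aa (n : ℕ) : ℝ := (1 + n : ℝ) / (1 + Real.log (1 + n))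

lemma log_e_mul (n : ℕ) : Real.log (Real.exp 1 * (1 + n)) = 1 + Real.log (1 + (n:ℝ)) := by
  rw [Real.log_mul (Real.exp_ne_zero 1) (by positivity), Real.log_exp]

lemma one_le_denom (n : ℕ) : 1 ≤ 1 + Real.log (1 + (n:ℝ)) := by
  have : 0 ≤ Real.log (1 + (n:ℝ)) := Real.log_nonneg (by linarith [Nat.cast_nonneg (α := ℝ) n])
  linarith

lemma aa_nonneg (n : ℕ) : 0 ≤ aa n := by
  unfold aa
  have := one_le_denom n
  positivity

lemma aa_le (n : ℕ) : aa n ≤ 1 + n := by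
  unfold aa
  have h := one_le_denom n
  rw [div_le_iff₀ (by linarith)]
  nlinarith [Nat.cast_nonneg (α := ℝ) n]

lemma hsum_aux {t : ℝ} (ht0 : 0 < t) (ht1 : t < 1) :
    Summable (fun n : ℕ => ((n:ℝ) + 1) * t ^ n) := by
  have h1 : Summable (fun n : ℕ => (n:ℝ) * t ^ n) := by
    simpa using summable_pow_mul_geometric_of_norm_lt_one 1
      (r := t) (by rw [Real.norm_eq_abs, abs_of_pos ht0]; exact ht1)
  have h2 : Summable (fun n : ℕ => t ^ n) := summable_geometric_of_lt_one ht0.le ht1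
  simpa [add_mul, one_mul] using h1.add h2

lemma hsum_S {t : ℝ} (ht0 : 0 < t) (ht1 : t < 1) :
    Summable (fun n : ℕ => aa n * t ^ n) := by
  refine Summable.of_nonneg_of_le (fun n => by
      have := aa_nonneg n; positivity)
    (fun n => ?_) (hsum_aux ht0 ht1)
  have h := aa_le n
  have : aa n ≤ (n:ℝ) + 1 := by push_cast at h ⊢; linarith
  exact mul_le_mul_of_nonneg_right this (by positivity)

lemma sum_id {t : ℝ} (ht0 : 0 < t) (ht1 : t < 1) :
    ∑' n : ℕ, ((n:ℝ) + 1) * t ^ n = 1 / (1 - t) ^ 2 := by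
  have h1 : Summable (fun n : ℕ => (n:ℝ) * t ^ n) := by
    simpa using summable_pow_mul_geometric_of_norm_lt_one 1
      (r := t) (by rw [Real.norm_eq_abs, abs_of_pos ht0]; exact ht1)
  have h2 : Summable (fun n : ℕ => t ^ n) := summable_geometric_of_lt_one ht0.le ht1
  have e1 : ∑' n : ℕ, (n:ℝ) * t ^ n = t / (1 - t) ^ 2 :=
    tsum_coe_mul_geometric_of_norm_lt_one (by rw [Real.norm_eq_abs, abs_of_pos ht0]; exact ht1)
  have e2 : ∑' n : ℕ, t ^ n = (1 - t)⁻¹ := tsum_geometric_of_lt_one ht0.le ht1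
  have : ∑' n : ℕ, ((n:ℝ) + 1) * t ^ n
      = (∑' n : ℕ, (n:ℝ) * t ^ n) + ∑' n : ℕ, t ^ n := by
    rw [← Summable.tsum_add h1 h2]; congr 1; funext n; ring
  rw [this, e1, e2]
  have hne : (1:ℝ) - t ≠ 0 := by linarith
  field_simp
  ring

lemma sL_le_one {s : ℝ} (hs0 : 0 < s) : s * (1 - Real.log s) ≤ 1 := by
  have h := Real.log_le_sub_one_of_pos (x := s⁻¹) (by positivity)
  rw [Real.log_inv] at h
  have hinv : s * s⁻¹ = 1 := mul_inv_cancel₀ hs0.ne'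
  nlinarith


lemma upper (t s L : ℝ) (M : ℕ) (ht0 : 0 < t) (ht1 : t < 1) (hs : s = 1 - t)
    (hL : L = 1 - Real.log s)
    (hM1 : Real.sqrt (1/s) ≤ (M:ℝ)) (hM2 : (M:ℝ) ≤ Real.sqrt (1/s) + 1) :
    ∑' n : ℕ, aa n * t ^ n ≤ 6 / (s ^ 2 * L) := by
  have hs0 : 0 < s := by rw [hs]; linarith
  have hs1 : s ≤ 1 := by rw [hs]; linarith
  have hlogs : Real.log s ≤ 0 := Real.log_nonpos hs0.le hs1
  have hL1 : 1 ≤ L := by rw [hL]; linarith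
  have hL0 : 0 < L := by linarith
  have hr1 : 1 ≤ Real.sqrt (1/s) := Real.one_le_sqrt.2 (by rw [le_div_iff₀ hs0]; linarith)
  have hr2 : Real.sqrt (1/s) ^ 2 = 1 / s := Real.sq_sqrt (by positivity)
  have hsum := hsum_S ht0 ht1
  have hsplit := Summable.sum_add_tsum_nat_add (f := fun n : ℕ => aa n * t ^ n) M hsum
  -- head bound
  have hhead : ∑ i ∈ Finset.range M, aa i * t ^ i ≤ (M : ℝ) * M := by
    have hterm : ∀ i ∈ Finset.range M, aa i * t ^ i ≤ (M : ℝ) := by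
      intro i hi
      have hi' : (i : ℝ) + 1 ≤ (M : ℝ) := by
        have := Finset.mem_range.1 hi
        exact_mod_cast Nat.succ_le_of_lt this
      have h1 : aa i ≤ (i:ℝ) + 1 := by have := aa_le i; push_cast at this ⊢; linarith
      have h2 : t ^ i ≤ 1 := pow_le_one₀ ht0.le ht1.le
      have h3 : 0 ≤ aa i := aa_nonneg i
      nlinarith
    calc ∑ i ∈ Finset.range M, aa i * t ^ i ≤ ∑ i ∈ Finset.range M, (M:ℝ) :=
          Finset.sum_le_sum hterm
      _ = (M:ℝ) * M := by simp [mul_comm]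
  have hheadb : (M:ℝ) * M ≤ 4 / s := by
    have h5 : (M:ℝ)*M ≤ 4 * (1/s) := by nlinarith
    have h6 : 4 * (1/s) = 4/s := by ring
    linarith
  -- tail bound
  have htailterm : ∀ n : ℕ, aa (n + M) * t ^ (n + M)
      ≤ (2 / L) * (((n + M : ℕ):ℝ) + 1) * t ^ (n + M) := by
    intro n
    have hge : Real.sqrt (1/s) ≤ 1 + ((n + M : ℕ):ℝ) := by
      push_cast
      have : (0:ℝ) ≤ (n:ℝ) := Nat.cast_nonneg n
      linarith
    have hlogge : Real.log (Real.sqrt (1/s)) ≤ Real.log (1 + ((n + M:ℕ):ℝ)) :=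
      Real.log_le_log (by positivity) hge
    have hlogr : Real.log (Real.sqrt (1/s)) = Real.log (1/s) / 2 := Real.log_sqrt (by positivity)
    have hlog1s : Real.log (1/s) = - Real.log s := by rw [one_div, Real.log_inv]
    have hden : L / 2 ≤ 1 + Real.log (1 + ((n + M:ℕ):ℝ)) := by
      rw [hlogr, hlog1s] at hlogge
      rw [hL]
      linarith
    have haabd : aa (n + M) ≤ (2 / L) * (((n + M:ℕ):ℝ) + 1) := by
      unfold aa
      rw [div_le_iff₀ (by linarith [one_le_denom (n+M)])]
      calc (1:ℝ) + ((n + M:ℕ):ℝ) = (2/L * (((n + M:ℕ):ℝ) + 1)) * (L/2) := by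
            field_simp; ring
        _ ≤ (2/L * (((n + M:ℕ):ℝ) + 1)) * (1 + Real.log (1 + ((n + M:ℕ):ℝ))) := by
            apply mul_le_mul_of_nonneg_left hden
            positivity
    have ht : (0:ℝ) ≤ t ^ (n + M) := by positivity
    exact mul_le_mul_of_nonneg_right haabd ht
  have htsum_shift : Summable (fun n : ℕ => (((n + M:ℕ):ℝ) + 1) * t ^ (n + M)) :=
    (summable_nat_add_iff M).2 (hsum_aux ht0 ht1)
  have htsum_shift2 : Summable (fun n : ℕ => (2/L) * ((((n + M:ℕ):ℝ) + 1) * t ^ (n + M))) :=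
    htsum_shift.mul_left _
  have htail : ∑' n : ℕ, aa (n + M) * t ^ (n + M) ≤ (2 / L) * (1 / s ^ 2) := by
    have step1 : ∑' n : ℕ, aa (n + M) * t ^ (n + M)
        ≤ ∑' n : ℕ, (2/L) * ((((n + M:ℕ):ℝ) + 1) * t ^ (n + M)) := by
      refine Summable.tsum_le_tsum (fun n => ?_) ((summable_nat_add_iff M).2 hsum) htsum_shift2
      rw [← mul_assoc]
      exact htailterm n
    have step2 : ∑' n : ℕ, (2/L) * ((((n + M:ℕ):ℝ) + 1) * t ^ (n + M))
        = (2/L) * ∑' n : ℕ, (((n + M:ℕ):ℝ) + 1) * t ^ (n + M) := tsum_mul_left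
    have step3 : ∑' n : ℕ, (((n + M:ℕ):ℝ) + 1) * t ^ (n + M) ≤ 1 / s ^ 2 := by
      have hs' := Summable.sum_add_tsum_nat_add (f := fun n : ℕ => ((n:ℝ) + 1) * t ^ n) M (hsum_aux ht0 ht1)
      have hhead0 : 0 ≤ ∑ i ∈ Finset.range M, ((i:ℝ) + 1) * t ^ i := by
        apply Finset.sum_nonneg; intro i _; positivity
      have hid := sum_id ht0 ht1
      rw [hid] at hs'
      rw [hs]
      push_cast at hs' ⊢
      linarith
    calc ∑' n : ℕ, aa (n + M) * t ^ (n + M)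
        ≤ (2/L) * ∑' n : ℕ, (((n + M:ℕ):ℝ) + 1) * t ^ (n + M) := by rw [← step2]; exact step1
      _ ≤ (2/L) * (1 / s^2) := by
          apply mul_le_mul_of_nonneg_left step3 (by positivity)
  -- combine
  have hcomb : ∑' n : ℕ, aa n * t ^ n ≤ 4 / s + (2/L) * (1 / s^2) := by
    rw [← hsplit]; linarith [hhead, hheadb, htail]
  have hsL : s * L ≤ 1 := by rw [hL]; exact sL_le_one hs0
  have h1 : 4 / s ≤ 4 / (s^2 * L) := by
    rw [div_le_div_iff₀ hs0 (by positivity)]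
    nlinarith
  have h2 : (2/L) * (1/s^2) = 2 / (s^2 * L) := by ring
  have h3 : 4 / (s^2*L) + 2/(s^2*L) = 6 / (s^2 * L) := by ring
  linarith

lemma lower_small (t s L : ℝ) (ht0 : 0 < t) (ht1 : t < 1) (hs : s = 1 - t)
    (hL : L = 1 - Real.log s) (hs12 : 1/2 < s) :
    1/200 / (s ^ 2 * L) ≤ ∑' n : ℕ, aa n * t ^ n := by
  have hs0 : 0 < s := by linarith
  have hs1 : s ≤ 1 := by rw [hs]; linarith
  have hlogs : Real.log s ≤ 0 := Real.log_nonpos hs0.le hs1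
  have hL1 : 1 ≤ L := by rw [hL]; linarith
  have hsum := hsum_S ht0 ht1
  have h0 : aa 0 * t ^ 0 ≤ ∑' n : ℕ, aa n * t ^ n :=
    Summable.le_tsum hsum 0 (fun j _ => by have := aa_nonneg j; positivity)
  have haa0 : aa 0 * t ^ 0 = 1 := by
    unfold aa; norm_num
  rw [haa0] at h0
  have hA : 1/200 ≤ s^2 * L := by nlinarith
  have : 1/200 / (s^2*L) ≤ 1 := by
    rw [div_le_one (by nlinarith)]
    exact hA
  linarith

lemma lower_big (t s L : ℝ) (K : ℕ) (ht0 : 0 < t) (ht1 : t < 1) (hs : s = 1 - t)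
    (hL : L = 1 - Real.log s) (hs12 : s ≤ 1/2)
    (hK1 : (K:ℝ) ≤ 1/s) (hK2 : 1/s < (K:ℝ) + 1) :
    1/200 / (s ^ 2 * L) ≤ ∑' n : ℕ, aa n * t ^ n := by
  have hs0 : 0 < s := by rw [hs]; linarith
  have hs1 : s ≤ 1 := by linarith
  have ht12 : 1/2 ≤ t := by rw [hs] at hs12; linarith
  have hlogs : Real.log s ≤ 0 := Real.log_nonpos hs0.le hs1
  have hL1 : 1 ≤ L := by rw [hL]; linarith
  have hL0 : 0 < L := by linarith
  have h1s : 2 ≤ 1/s := by rw [le_div_iff₀ hs0]; linarith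
  have hsum := hsum_S ht0 ht1
  -- exp(-4) ≤ t^(2K)
  have hlogt : -2*s ≤ Real.log t := by
    have h := Real.log_le_sub_one_of_pos (x := t⁻¹) (by positivity)
    rw [Real.log_inv] at h
    have htinv : t * t⁻¹ = 1 := mul_inv_cancel₀ ht0.ne'
    have h2 : t⁻¹ ≤ 1 + 2*s := by
      rw [inv_eq_one_div, div_le_iff₀ ht0, hs]
      nlinarith
    linarith
  have hlogt0 : Real.log t ≤ 0 := Real.log_nonpos ht0.le ht1.le
  have h2K : (2*K : ℝ) ≤ 2/s := by
    have : (2:ℝ)/s = 2 * (1/s) := by ring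
    rw [this]; linarith
  have hexp : Real.exp (-4) ≤ t ^ (2*K) := by
    rw [← Real.exp_log (pow_pos ht0 (2*K)), Real.log_pow]
    apply Real.exp_le_exp.2
    have e1 : (2/s) * Real.log t ≤ (2*(K:ℝ)) * Real.log t :=
      mul_le_mul_of_nonpos_right h2K hlogt0
    have e2 : -4 ≤ (2/s) * Real.log t := by
      have hss : s * (2/s) = 2 := by field_simp
      nlinarith
    push_cast
    linarith
  -- per-term lower bound on Icc K (2K)
  have hlog4 : Real.log 4 ≤ 2 := by
    have h2 : Real.log 2 < 0.6931471808 := Real.log_two_lt_d9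
    have : Real.log 4 = 2 * Real.log 2 := by
      rw [show (4:ℝ) = 2^2 by norm_num, Real.log_pow]; push_cast; ring
    linarith
  have haabd : ∀ n ∈ Finset.Icc K (2*K), ((K:ℝ)+1)/(3*L) ≤ aa n := by
    intro n hn
    obtain ⟨hn1, hn2⟩ := Finset.mem_Icc.1 hn
    have hn1' : (K:ℝ) ≤ n := by exact_mod_cast hn1
    have hn2' : (n:ℝ) ≤ 2*K := by exact_mod_cast hn2
    have hub : 1 + (n:ℝ) ≤ 4/s := by
      have : (4:ℝ)/s = 4 * (1/s) := by ring
      rw [this]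
      nlinarith
    have hlogub : Real.log (1 + (n:ℝ)) ≤ Real.log 4 - Real.log s := by
      have := Real.log_le_log (by positivity : (0:ℝ) < 1 + n) hub
      rwa [Real.log_div (by norm_num) hs0.ne'] at this
    have hdenub : 1 + Real.log (1 + (n:ℝ)) ≤ 3*L := by
      rw [hL]; linarith
    unfold aa
    apply div_le_div₀ (by positivity) (by linarith) (by linarith [one_le_denom n]) hdenub
  have htpow : ∀ n ∈ Finset.Icc K (2*K), Real.exp (-4) ≤ t ^ n := by
    intro n hn
    obtain ⟨_, hn2⟩ := Finset.mem_Icc.1 hn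
    exact le_trans hexp (pow_le_pow_of_le_one ht0.le ht1.le hn2)
  have hterm : ∀ n ∈ Finset.Icc K (2*K),
      ((K:ℝ)+1)/(3*L) * Real.exp (-4) ≤ aa n * t ^ n := by
    intro n hn
    apply mul_le_mul (haabd n hn) (htpow n hn) (Real.exp_pos _).le
      (le_trans (by positivity) (haabd n hn))
  have hcard : (Finset.Icc K (2*K)).card = K + 1 := by
    rw [Nat.card_Icc]; omega
  have hsumlb : ((K:ℝ)+1) * (((K:ℝ)+1)/(3*L) * Real.exp (-4))
      ≤ ∑ n ∈ Finset.Icc K (2*K), aa n * t ^ n := by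
    have := Finset.card_nsmul_le_sum (Finset.Icc K (2*K)) (fun n => aa n * t ^ n)
      (((K:ℝ)+1)/(3*L) * Real.exp (-4)) hterm
    rw [hcard, nsmul_eq_mul] at this
    push_cast at this
    exact this
  have htsumlb : ∑ n ∈ Finset.Icc K (2*K), aa n * t ^ n ≤ ∑' n : ℕ, aa n * t ^ n :=
    Summable.sum_le_tsum _ (fun j _ => by have := aa_nonneg j; positivity) hsum
  -- final arithmetic
  have he4 : (3:ℝ)/200 ≤ Real.exp (-4) := by
    have h1 : Real.exp 4 = (Real.exp 1)^4 := by
      rw [← Real.exp_nat_mul]; norm_num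
    have h2 : Real.exp 1 < 2.7182818286 := Real.exp_one_lt_d9
    have h3 : (0:ℝ) < Real.exp 1 := Real.exp_pos 1
    have h4 : Real.exp 4 ≤ 60 := by
      have e2 : Real.exp 1 ^ 2 ≤ 7.39 := by nlinarith
      have e4 : Real.exp 1 ^ 4 = (Real.exp 1 ^ 2) ^ 2 := by ring
      rw [h1, e4]
      nlinarith
    have h5 : Real.exp (-4) = (Real.exp 4)⁻¹ := by
      rw [← Real.exp_neg]
    rw [h5]
    rw [le_inv_comm₀ (by norm_num) (Real.exp_pos 4)]
    linarith
  have hu : 1/s ≤ (K:ℝ)+1 := hK2.le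
  have hfin : 1/200 / (s^2*L) ≤ ((K:ℝ)+1) * (((K:ℝ)+1)/(3*L) * Real.exp (-4)) := by
    have expand : ((K:ℝ)+1) * (((K:ℝ)+1)/(3*L) * Real.exp (-4))
        = ((K:ℝ)+1)^2 * Real.exp (-4) / (3*L) := by ring
    rw [expand, div_le_div_iff₀ (by positivity) (by positivity)]
    have hu2 : (1/s)^2 ≤ ((K:ℝ)+1)^2 := by nlinarith
    have hss : s^2 * (1/s)^2 = 1 := by field_simp
    have hprod : (1/s)^2 * (3/200) ≤ ((K:ℝ)+1)^2 * Real.exp (-4) :=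
      mul_le_mul hu2 he4 (by norm_num) (by positivity)
    nlinarith [mul_le_mul_of_nonneg_right hprod (by positivity : (0:ℝ) ≤ s^2 * L)]
  linarith

/-- For every `x ∈ (0,1)`, `∑_{n≥0} ((1+n)/log(e(1+n))) x^(2n)` is comparable, up to
absolute constants, to `1/((1-x²)² log(e/(1-x²)))`. -/
theorem stmt0 :
    ∃ c C : ℝ, 0 < c ∧ 0 < C ∧ ∀ x : ℝ, x ∈ Set.Ioo (0:ℝ) 1 →
      c / ((1 - x^2)^2 * Real.log (Real.exp 1 / (1 - x^2)))
        ≤ ∑' n : ℕ, ((1 + n : ℝ) / Real.log (Real.exp 1 * (1 + n))) * x^(2*n) ∧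
      ∑' n : ℕ, ((1 + n : ℝ) / Real.log (Real.exp 1 * (1 + n))) * x^(2*n)
        ≤ C / ((1 - x^2)^2 * Real.log (Real.exp 1 / (1 - x^2))) := by
  refine ⟨1/200, 6, by norm_num, by norm_num, ?_⟩
  rintro x ⟨hx0, hx1⟩
  have ht0 : 0 < x^2 := by positivity
  have ht1 : x^2 < 1 := by nlinarith
  have hs0 : 0 < 1 - x^2 := by linarith
  have hser : ∑' n : ℕ, ((1 + n : ℝ) / Real.log (Real.exp 1 * (1 + n))) * x^(2*n)
      = ∑' n : ℕ, aa n * (x^2) ^ n := by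
    apply tsum_congr
    intro n
    rw [pow_mul, log_e_mul]
    rfl
  have hden : Real.log (Real.exp 1 / (1 - x^2)) = 1 - Real.log (1 - x^2) := by
    rw [Real.log_div (Real.exp_ne_zero 1) hs0.ne', Real.log_exp]
  rw [hser, hden]
  constructor
  · by_cases hcase : 1/2 < 1 - x^2
    · exact lower_small (x^2) (1-x^2) (1 - Real.log (1-x^2)) ht0 ht1 rfl rfl hcase
    · push_neg at hcase
      refine lower_big (x^2) (1-x^2) (1 - Real.log (1-x^2)) ⌊1/(1-x^2)⌋₊ ht0 ht1 rfl rfl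
        hcase (Nat.floor_le (by positivity)) (Nat.lt_floor_add_one _)
  · exact upper (x^2) (1-x^2) (1 - Real.log (1-x^2)) ⌈Real.sqrt (1/(1-x^2))⌉₊ ht0 ht1 rfl rfl
      (Nat.le_ceil _) (Nat.ceil_lt_add_one (Real.sqrt_nonneg _)).le
end

section
/- Let p ≥ 2 and let φ be a holomorphic self-map of the unit disc with nontangential boundary values φ* a.e. on the circle. Define the level sets E_φ(s) = {ζ ∈ 𝕋 : |φ*(ζ)| ≥ s} and the pull-back measure m_φ(B) = |{ζ ∈ 𝕋 : φ*(ζ) ∈ B}| for Borel B ⊆ closure(𝔻). For the dyadic Carleson boxes W_{n,j} = {z ∈ 𝔻 : 1-2^{-n} ≤ |z| < 1, 2πj/2^n ≤ arg z < 2π(j+1)/2^n}, j = 0,…,2^n - 1, if ∫₀¹ |E_φ(s)|^{p/2}/(1-s)^{1+p/2} ds < ∞, then ∑_n 2^{np/2} ∑_{j=0}^{2^n-1} m_φ(W_{n,j})^{p/2} < ∞. -/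
/-!
A point of `W_{n,j}` has modulus at least `1 - 2^{-n}` and the boxes `W_{n,j}`, `j < 2^n`, are
disjoint, so `∑_j m_φ(W_{n,j}) ≤ |E_φ(1 - 2^{-n})|`; as `p/2 ≥ 1`, also
`∑_j m_φ(W_{n,j})^{p/2} ≤ |E_φ(1 - 2^{-n})|^{p/2}`. On `(1 - 2^{-n}, 1 - 2^{-n-1}]` the integrand
is at least `2^{n(1+p/2)} |E_φ(1 - 2^{-n-1})|^{p/2}`, so the pieces of the integral over these
dyadic intervals dominate the terms of the series. The additivity of `m_φ` needs `φ*` to be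
measurable: it is an a.e. limit of the continuous functions `t ↦ φ(r e^{it})`, `r → 1⁻`.
-/

open Real Complex MeasureTheory Filter

/-- Argument of `z` normalized to lie in `[0, 2π)`. -/
noncomputable def argIn (z : ℂ) : ℝ :=
  if 0 ≤ Complex.arg z then Complex.arg z else Complex.arg z + 2*π

/-- The dyadic Carleson box `W_{n,j}`. -/
def dyadicBox (n j : ℕ) : Set ℂ :=
  {z : ℂ | ‖z‖ < 1 ∧ 1 - (1/2:ℝ)^n ≤ ‖z‖ ∧
    2*π*j/2^n ≤ argIn z ∧ argIn z < 2*π*(j+1)/2^n}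

open Set Topology Function TopologicalSpace

theorem Real.sum_rpow_le_rpow_sum {ι : Type*} (s : Finset ι) {f : ι → ℝ} (hf : ∀ i ∈ s, 0 ≤ f i)
    {q : ℝ} (hq : 1 ≤ q) : ∑ i ∈ s, f i ^ q ≤ (∑ i ∈ s, f i) ^ q := by
  induction s using Finset.cons_induction with
  | empty => simp [Real.zero_rpow (by positivity : q ≠ 0)]
  | cons a s _ ih =>
    rw [Finset.forall_mem_cons] at hf
    rw [Finset.sum_cons, Finset.sum_cons]
    exact (add_le_add le_rfl (ih hf.2)).trans
      (Real.add_rpow_le_rpow_add hf.1 (Finset.sum_nonneg hf.2) hq)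

theorem aemeasurable_of_tendsto_radial {E : Type*} [TopologicalSpace E] [PseudoMetrizableSpace E]
    [MeasurableSpace E] [BorelSpace E] {f : ℂ → E} (hf : ContinuousOn f (Metric.ball 0 1))
    {μ : Measure ℝ} {g : ℝ → E}
    (hg : ∀ᵐ t : ℝ ∂μ, Tendsto (fun r : ℝ => f (r * Complex.exp (I * t))) (𝓝[<] 1) (𝓝 (g t))) :
    AEMeasurable g μ := by
  obtain ⟨r, -, hr01, hr⟩ := exists_seq_strictMono_tendsto' (zero_lt_one' ℝ)
  have hr' : Tendsto r atTop (𝓝[<] 1) :=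
    tendsto_nhdsWithin_iff.2 ⟨hr, Eventually.of_forall fun k => (hr01 k).2⟩
  refine aemeasurable_of_tendsto_metrizable_ae atTop
    (f := fun k (t : ℝ) => f (r k * Complex.exp (I * t))) (fun k => ?_)
    (hg.mono fun t ht => ht.comp hr')
  have hmem : ∀ t : ℝ, (r k : ℂ) * Complex.exp (I * t) ∈ Metric.ball (0:ℂ) 1 := by
    intro t
    simpa [mul_comm I, Complex.norm_exp_ofReal_mul_I, abs_of_pos (hr01 k).1] using (hr01 k).2
  exact (hf.comp_continuous (by fun_prop) hmem).measurable.aemeasurable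

theorem measure_sep_mem_eq_map {α β : Type*} [MeasurableSpace α] [MeasurableSpace β]
    (μ : Measure α) {S : Set α} (hS : MeasurableSet S) {g : α → β}
    (hg : AEMeasurable g (μ.restrict S)) {B : Set β} (hB : MeasurableSet B) :
    μ {t ∈ S | g t ∈ B} = (μ.restrict S).map g B := by
  rw [Measure.map_apply_of_aemeasurable hg hB, Measure.restrict_apply' hS, Set.inter_comm]
  rfl

theorem measurable_argIn : Measurable argIn :=
  Measurable.ite (measurableSet_le measurable_const Complex.measurable_arg)
    Complex.measurable_arg (Complex.measurable_arg.add_const _)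

theorem measurableSet_dyadicBox (n j : ℕ) : MeasurableSet (dyadicBox n j) :=
  (measurableSet_lt measurable_norm measurable_const).inter <|
    (measurableSet_le measurable_const measurable_norm).inter <|
      (measurableSet_le measurable_const measurable_argIn).inter
        (measurableSet_lt measurable_argIn measurable_const)

theorem disjoint_dyadicBox_of_lt (n : ℕ) {j j' : ℕ} (h : j < j') :
    Disjoint (dyadicBox n j) (dyadicBox n j') := by
  refine Set.disjoint_left.2 fun z hz hz' => hz.2.2.2.not_ge (hz'.2.2.1.trans' ?_)
  have : (j:ℝ) + 1 ≤ j' := by exact_mod_cast h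
  gcongr

theorem pairwise_disjoint_dyadicBox (n : ℕ) : Pairwise (Disjoint on fun j => dyadicBox n j) := by
  intro j j' hne
  rcases hne.lt_or_gt with h | h
  · exact disjoint_dyadicBox_of_lt n h
  · exact (disjoint_dyadicBox_of_lt n h).symm

theorem sum_measureReal_dyadicBox_le (ν : Measure ℂ) [IsFiniteMeasure ν] (n : ℕ) :
    ∑ j ∈ Finset.range (2^n), ν.real (dyadicBox n j) ≤ ν.real {z | 1 - (1/2:ℝ)^n ≤ ‖z‖} := by
  rw [← measureReal_biUnion_finset (fun j _ j' _ hne => pairwise_disjoint_dyadicBox n hne)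
    (fun j _ => measurableSet_dyadicBox n j)]
  exact measureReal_mono (Set.iUnion₂_subset fun j _ z hz => hz.2.1)

section DyadicLevelSets

variable {E : ℝ → ℝ} {q : ℝ}

theorem div_two_mul_rpow_le_setIntegral_Ioc (hE0 : ∀ s, 0 ≤ E s) (hE : Antitone E) (hq : 0 ≤ q)
    {h : ℝ} (hh : 0 < h)
    (hint : IntegrableOn (fun s => E s ^ q / (1 - s) ^ (1 + q)) (Ioc (1 - h) (1 - h / 2))) :
    E (1 - h / 2) ^ q / (2 * h ^ q) ≤
      ∫ s in Ioc (1 - h) (1 - h / 2), E s ^ q / (1 - s) ^ (1 + q) := by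
  have hbound : ∀ s ∈ Ioc (1 - h) (1 - h / 2),
      E (1 - h / 2) ^ q / h ^ (1 + q) ≤ E s ^ q / (1 - s) ^ (1 + q) := by
    rintro s ⟨hs₁, hs₂⟩
    have : 0 < 1 - s := by linarith
    exact div_le_div₀ (Real.rpow_nonneg (hE0 _) _) (Real.rpow_le_rpow (hE0 _) (hE hs₂) hq)
      (by positivity) (Real.rpow_le_rpow this.le (by linarith) (by linarith))
  have := setIntegral_ge_of_const_le_real measurableSet_Ioc measure_Ioc_lt_top.ne hbound hint
  rw [Real.volume_real_Ioc_of_le (by linarith)] at this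
  convert this using 1
  rw [Real.rpow_add hh, Real.rpow_one]
  field_simp
  ring

theorem summable_two_rpow_mul_rpow_of_integrableOn (hE0 : ∀ s, 0 ≤ E s) (hE : Antitone E)
    (hq : 0 ≤ q) (hint : IntegrableOn (fun s => E s ^ q / (1 - s) ^ (1 + q)) (Ioo 0 1)) :
    Summable fun n : ℕ => (2:ℝ) ^ ((n:ℝ) * q) * E (1 - (1/2:ℝ)^n) ^ q := by
  have hI : ∀ n : ℕ, Ioc (1 - (1/2:ℝ)^n) (1 - (1/2)^(n+1)) ⊆ Ioo 0 1 := by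
    rintro n s ⟨hs₁, hs₂⟩
    have := pow_le_one₀ (n := n) (by norm_num : (0:ℝ) ≤ 1/2) (by norm_num)
    have : (0:ℝ) < (1/2)^(n+1) := by positivity
    constructor <;> linarith
  have hdisj : Pairwise (Disjoint on fun n : ℕ => Ioc (1 - (1/2:ℝ)^n) (1 - (1/2)^(n+1))) := by
    refine Monotone.pairwise_disjoint_on_Ioc_succ (f := fun n : ℕ => 1 - (1/2:ℝ)^n) ?_
    intro m n hmn
    have := pow_le_pow_of_le_one (by norm_num : (0:ℝ) ≤ 1/2) (by norm_num) hmn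
    exact sub_le_sub_left this 1
  have hsum := (hasSum_integral_iUnion (fun _ => measurableSet_Ioc) hdisj
    (hint.mono_set (Set.iUnion_subset hI))).summable
  refine (summable_nat_add_iff 1).1 <| Summable.of_nonneg_of_le
    (fun n => mul_nonneg (by positivity) (Real.rpow_nonneg (hE0 _) _))
    (fun n => ?_) (hsum.mul_left (2 ^ (q + 1)))
  have hhalf : (1/2:ℝ)^(n+1) = (1/2)^n / 2 := by ring
  have hscale : (2:ℝ) ^ (((n + 1 : ℕ) : ℝ) * q) = 2 ^ (q + 1) / (2 * ((1/2:ℝ)^n) ^ q) := by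
    rw [one_div, inv_pow, Real.inv_rpow (by positivity), ← Real.rpow_natCast_mul (by norm_num),
      Real.rpow_add_one (by norm_num)]
    push_cast
    rw [add_mul, one_mul, Real.rpow_add (by norm_num)]
    field_simp
  have key := div_two_mul_rpow_le_setIntegral_Ioc hE0 hE hq (h := (1/2)^n) (by positivity)
    (hhalf ▸ hint.mono_set (hI n))
  rw [hhalf, hscale, div_mul_eq_mul_div, mul_div_assoc]
  gcongr

end DyadicLevelSets

theorem stmt7_general (p : ℝ) (hp : 2 ≤ p) (φ : ℂ → ℂ)
    (hφ : DifferentiableOn ℂ φ (Metric.ball (0:ℂ) 1))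
    (φs : ℝ → ℂ)
    (hbd : ∀ᵐ (t : ℝ) ∂(volume.restrict (Set.Ico (0:ℝ) (2*π))),
      Tendsto (fun r : ℝ => φ (r * Complex.exp (Complex.I * (t:ℂ))))
        (nhdsWithin 1 (Set.Iio 1)) (nhds (φs t)))
    (hint : IntegrableOn
      (fun s : ℝ =>
        ((volume {t ∈ Set.Ico (0:ℝ) (2*π) | s ≤ ‖φs t‖}).toReal / (2*π)) ^ (p/2)
          / (1 - s) ^ (1 + p/2))
      (Set.Ioo (0:ℝ) 1)) :
    Summable (fun n : ℕ => (2:ℝ) ^ ((n:ℝ) * p/2) *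
      ∑ j ∈ Finset.range (2^n),
        ((volume {t ∈ Set.Ico (0:ℝ) (2*π) | φs t ∈ dyadicBox n j}).toReal / (2*π))
          ^ (p/2)) := by
  -- `ν = 2π · m_φ`
  set ν := (volume.restrict (Ico (0:ℝ) (2*π))).map φs
  have hν : ∀ B, MeasurableSet B → volume {t ∈ Ico (0:ℝ) (2*π) | φs t ∈ B} = ν B :=
    fun _ => measure_sep_mem_eq_map volume measurableSet_Ico
      (aemeasurable_of_tendsto_radial hφ.continuousOn hbd)
  set E : ℝ → ℝ := fun s => ν.real {z | s ≤ ‖z‖} / (2*π)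
  have hE : Antitone E := fun s s' hss' =>
    div_le_div_of_nonneg_right (measureReal_mono fun z (hz : s' ≤ ‖z‖) => hss'.trans hz)
      (by positivity)
  have hint' : IntegrableOn (fun s => E s ^ (p/2) / (1 - s) ^ (1 + p/2)) (Ioo 0 1) := by
    refine hint.congr_fun (fun s _ => ?_) measurableSet_Ioo
    have hB : MeasurableSet {z : ℂ | s ≤ ‖z‖} := measurableSet_le measurable_const measurable_norm
    simp only [E, measureReal_def, ← hν _ hB]
    rfl
  refine Summable.of_nonneg_of_le (fun n => by positivity) (fun n => ?_)
    (summable_two_rpow_mul_rpow_of_integrableOn (fun s => by positivity) hE (by linarith) hint')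
  rw [mul_div_assoc]
  gcongr
  calc ∑ j ∈ Finset.range (2^n),
        ((volume {t ∈ Ico (0:ℝ) (2*π) | φs t ∈ dyadicBox n j}).toReal / (2*π)) ^ (p/2)
      = ∑ j ∈ Finset.range (2^n), (ν.real (dyadicBox n j) / (2*π)) ^ (p/2) := by
        simp only [measureReal_def, hν _ (measurableSet_dyadicBox n _)]
    _ ≤ (∑ j ∈ Finset.range (2^n), ν.real (dyadicBox n j) / (2*π)) ^ (p/2) :=
        Real.sum_rpow_le_rpow_sum _ (fun _ _ => by positivity) (by linarith)
    _ ≤ E (1 - (1/2)^n) ^ (p/2) := by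
        rw [← Finset.sum_div]
        gcongr
        exact div_le_div_of_nonneg_right (sum_measureReal_dyadicBox_le ν n) (by positivity)

/-- Sufficient level-set condition for Schatten membership: if `p ≥ 2`, `φ` is a holomorphic
self-map of `𝔻` with boundary values `φs` a.e., and
`∫₀¹ |E_φ(s)|^{p/2}/(1-s)^{1+p/2} ds < ∞`, then
`∑_n 2^{np/2} ∑_j m_φ(W_{n,j})^{p/2} < ∞`. -/
theorem stmt7 (p : ℝ) (hp : 2 ≤ p) (φ : ℂ → ℂ)
    (hφ : DifferentiableOn ℂ φ (Metric.ball (0:ℂ) 1))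
    (hφself : ∀ z ∈ Metric.ball (0:ℂ) 1, φ z ∈ Metric.ball (0:ℂ) 1)
    (φs : ℝ → ℂ)
    (hbd : ∀ᵐ (t : ℝ) ∂(volume.restrict (Set.Ico (0:ℝ) (2*π))),
      Tendsto (fun r : ℝ => φ (r * Complex.exp (Complex.I * (t:ℂ))))
        (nhdsWithin 1 (Set.Iio 1)) (nhds (φs t)))
    (hint : IntegrableOn
      (fun s : ℝ =>
        ((volume {t ∈ Set.Ico (0:ℝ) (2*π) | s ≤ ‖φs t‖}).toReal / (2*π)) ^ (p/2)
          / (1 - s) ^ (1 + p/2))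
      (Set.Ioo (0:ℝ) 1)) :
    Summable (fun n : ℕ => (2:ℝ) ^ ((n:ℝ) * p/2) *
      ∑ j ∈ Finset.range (2^n),
        ((volume {t ∈ Set.Ico (0:ℝ) (2*π) | φs t ∈ dyadicBox n j}).toReal / (2*π))
          ^ (p/2)) :=
  stmt7_general p hp φ hφ φs hbd hint
end

section
/- Let φ be a holomorphic self-map of the unit disc 𝔻 whose image φ(𝔻) is contained in a compact subset K of 𝔻 ∪ {finitely many boundary points}, specifically a closed polygon inscribed in the closed unit disc touching the circle only at its vertices, and suppose the composition operator C_φ is bounded on the weighted Dirichlet space D_α (0 < α ≤ 1), so that μ_{φ,α}(W(ξ,h)) = O(h^{2+α}) uniformly in ξ ∈ 𝕋 as h → 0, where μ_{φ,α}(Ω) = ∫_Ω N_{φ,α} dA. Then ∫_𝔻 |φ'(z)|²/(1-|φ(z)|²)² dA_α(z) < ∞. -/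
/-!
After the change of variables the integral becomes `∫ (1 - |w|²)⁻² dν` over the polygon `K ⊇ φ(𝔻)`,
where `dν = N dA`. A point of `K` at distance `t` from the circle lies within `O(t)` of a vertex on
the circle, hence in one of finitely many Carleson boxes of size `O(t)`. So the dyadic annulus
`1 - |w| ≈ 2⁻ⁿ` carries `ν`-mass `O(2^(-n(2+α)))` of `K`, while the integrand there is `O(4ⁿ)`:
the series over `n` is geometric with ratio `2^(-α)`. The annuli away from the circle only need
`ν(𝔻) < ∞`, which holds because boxes with `h ↑ 1` exhaust the punctured disc.
-/

open Real Complex MeasureTheory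
open scoped ComplexConjugate

theorem abs_arg_mul_conj_le {v : ℂ} (hv : ‖v‖ = 1) (w : ℂ) :
    |arg (w * conj v)| ≤ π * ‖w - v‖ := by
  rcases eq_or_ne w 0 with rfl | hw
  · simp [hv, pi_pos.le]
  have hw' : 0 < ‖w‖ := norm_pos_iff.2 hw
  set u : ℂ := ‖w‖⁻¹ • w with hu_def
  have hu : ‖u‖ = 1 := norm_smul_inv_norm hw
  have harg : |arg (w * conj v)| = InnerProductGeometry.angle u v := by
    rw [hu_def, InnerProductGeometry.angle_smul_left_of_pos _ _ (inv_pos.2 hw'),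
      angle_eq_abs_arg hw (norm_ne_zero_iff.1 (by rw [hv]; exact one_ne_zero)),
      div_eq_mul_inv, inv_eq_conj hv]
  have huw : ‖u - w‖ ≤ ‖w - v‖ := by
    have : u - w = (‖w‖⁻¹ - 1) • w := by rw [sub_smul, one_smul]
    rw [this, norm_smul, Real.norm_eq_abs, ← abs_norm (w - v), norm_sub_rev]
    calc |‖w‖⁻¹ - 1| * ‖w‖ = |‖v‖ - ‖w‖| := by
          rw [hv, ← abs_norm w, ← abs_mul, abs_norm]; congr 1; field_simp
      _ ≤ |‖v - w‖| := by rw [abs_norm]; exact abs_norm_sub_norm_le v w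
  calc |arg (w * conj v)| = InnerProductGeometry.angle u v := harg
    _ ≤ π / 2 * ‖u - v‖ := angle_le_mul_norm_sub hu hv
    _ ≤ π / 2 * (‖u - w‖ + ‖w - v‖) := by gcongr; exact norm_sub_le_norm_sub_add_norm_sub _ _ _
    _ ≤ π * ‖w - v‖ := by nlinarith [pi_pos]

def carlesonBox (ξ : ℂ) (h : ℝ) : Set ℂ :=
  {z : ℂ | ‖z‖ < 1 ∧ 1 - h ≤ ‖z‖ ∧ |arg (z * conj ξ)| ≤ h}

theorem mem_carlesonBox_of_pi_mul_norm_sub_le {w v : ℂ} {h : ℝ} (hw : ‖w‖ < 1) (hv : ‖v‖ = 1)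
    (hwv : π * ‖w - v‖ ≤ h) : w ∈ carlesonBox v h := by
  have h1 : 1 - ‖w‖ ≤ ‖w - v‖ := by
    rw [← hv, norm_sub_rev]; exact norm_sub_norm_le v w
  have h2 : ‖w - v‖ ≤ π * ‖w - v‖ :=
    le_mul_of_one_le_left (norm_nonneg _) (by linarith [pi_gt_three])
  exact ⟨hw, by linarith, (abs_arg_mul_conj_le hv w).trans hwv⟩

theorem exists_finset_carlesonBox_cover :
    ∃ T : Finset ℂ, (∀ ξ ∈ T, ‖ξ‖ = 1) ∧ ∀ h : ℝ, 1 / 2 ≤ h →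
      {w : ℂ | w ≠ 0 ∧ ‖w‖ < 1 ∧ 1 - h ≤ ‖w‖} ⊆ ⋃ ξ ∈ T, carlesonBox ξ h := by
  obtain ⟨T, hT, hcover⟩ := (isCompact_sphere (0 : ℂ) 1).elim_nhds_subcover
    (fun ξ => Metric.ball ξ (2 * π)⁻¹) fun ξ _ => Metric.ball_mem_nhds ξ (by positivity)
  refine ⟨T, fun ξ hξ => mem_sphere_zero_iff_norm.1 (hT ξ hξ), ?_⟩
  rintro h hh w ⟨hw0, hw1, hwh⟩
  have hw : 0 < ‖w‖ := norm_pos_iff.2 hw0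
  obtain ⟨ξ, hξT, hξ⟩ :=
    Set.mem_iUnion₂.1 (hcover (mem_sphere_zero_iff_norm.2 (norm_smul_inv_norm (𝕜 := ℝ) hw0)))
  refine Set.mem_iUnion₂.2 ⟨ξ, hξT, hw1, hwh, ?_⟩
  have harg : arg (w * conj ξ) = arg ((‖w‖⁻¹ • w) * conj ξ) := by
    rw [smul_mul_assoc, real_smul, arg_real_mul _ (inv_pos.2 hw)]
  calc |arg (w * conj ξ)| ≤ π * ‖‖w‖⁻¹ • w - ξ‖ :=
        harg ▸ abs_arg_mul_conj_le (mem_sphere_zero_iff_norm.1 (hT ξ hξT)) _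
    _ ≤ π * (2 * π)⁻¹ := by gcongr; exact (mem_ball_iff_norm.1 hξ).le
    _ = 1 / 2 := by field_simp
    _ ≤ h := hh

theorem mem_of_mem_convexHull_of_norm_eq_one {E : Type*} [NormedAddCommGroup E]
    [NormedSpace ℝ E] [StrictConvexSpace ℝ E] {s : Set E} (hs : s ⊆ Metric.closedBall 0 1)
    {x : E} (hx : x ∈ convexHull ℝ s) (hx1 : ‖x‖ = 1) : x ∈ s :=
  extremePoints_convexHull_subset <|
    inter_extremePoints_subset_extremePoints_of_subset (convexHull_min hs (convex_closedBall 0 1))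
      ⟨hx, StrictConvexSpace.sphere_subset_extremePoints_closedBall 0 one_ne_zero
        (mem_sphere_zero_iff_norm.2 hx1)⟩

theorem two_mul_one_sub_re_mul_conj {v : ℂ} (hv : ‖v‖ = 1) (w : ℂ) :
    2 * (1 - (w * conj v).re) = 1 - ‖w‖ ^ 2 + ‖w - v‖ ^ 2 := by
  have := normSq_sub w v
  rw [normSq_eq_norm_sq, normSq_eq_norm_sq, normSq_eq_norm_sq, hv] at this
  linarith

theorem convexOn_mul_norm_sub_add_re_mul_conj {c : ℝ} (hc : 0 ≤ c) (v : ℂ) :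
    ConvexOn ℝ Set.univ fun w : ℂ => c * ‖w - v‖ + (w * conj v).re :=
  ((convexOn_univ_norm.comp_affineMap (AffineMap.id ℝ ℂ - AffineMap.const ℝ ℂ v)).smul hc).add
    ((reLm.comp (LinearMap.mulRight ℝ (conj v))).convexOn convex_univ)

open Filter Topology in
-- The polygon lies in a cone with apex at each of its vertices on the circle.
theorem exists_pos_mul_norm_sub_le_one_sub_re {V : Finset ℂ}
    (hV : (V : Set ℂ) ⊆ Metric.closedBall 0 1) :
    ∃ c > 0, ∀ v ∈ V, ‖v‖ = 1 → ∀ w ∈ convexHull ℝ (V : Set ℂ),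
      c * ‖w - v‖ ≤ 1 - (w * conj v).re := by
  have hpair : ∀ p ∈ V ×ˢ V, ∀ᶠ c in 𝓝[>] (0 : ℝ),
      ‖p.2‖ = 1 → c * ‖p.1 - p.2‖ ≤ 1 - (p.1 * conj p.2).re := by
    rintro ⟨u, v⟩ huv
    rcases eq_or_ne u v with rfl | hne
    · refine Eventually.of_forall fun c (hv : ‖u‖ = 1) => ?_
      have := two_mul_one_sub_re_mul_conj hv u
      simp only [sub_self, norm_zero, mul_zero, hv] at this ⊢
      linarith
    · have hd : 0 < ‖u - v‖ := norm_pos_iff.2 (sub_ne_zero.2 hne)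
      filter_upwards [Ioo_mem_nhdsGT (half_pos hd)] with c hc hv
      have hu : ‖u‖ ≤ 1 := mem_closedBall_zero_iff.1 (hV (Finset.mem_product.1 huv).1)
      have := two_mul_one_sub_re_mul_conj hv u
      nlinarith [hc.2, norm_nonneg u]
  obtain ⟨c, hc, hc0⟩ :=
    ((eventually_all_finset _).2 hpair).and self_mem_nhdsWithin |>.exists
  refine ⟨c, hc0, fun v hv hv1 w hw => ?_⟩
  obtain ⟨u, hu, hwu⟩ := ConvexOn.exists_ge_of_mem_convexHull
    (convexOn_mul_norm_sub_add_re_mul_conj hc0.le v) (Set.subset_univ _) hw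
  have := hc (u, v) (Finset.mem_product.2 ⟨hu, hv⟩) hv1
  dsimp only at hwu this
  linarith

theorem exists_norm_sub_lt_of_one_sub_norm_lt {V : Finset ℂ}
    (hV : (V : Set ℂ) ⊆ Metric.closedBall 0 1) {c : ℝ} (hc : 0 < c) :
    ∃ ε > 0, ∀ w ∈ convexHull ℝ (V : Set ℂ), 1 - ‖w‖ < ε → ∃ v ∈ V, ‖v‖ = 1 ∧ ‖w - v‖ < c := by
  set T := convexHull ℝ (V : Set ℂ) \ ⋃ v ∈ V.filter (‖·‖ = 1), Metric.ball v c
  have hT : IsCompact T := (V.finite_toSet.isCompact_convexHull (𝕜 := ℝ)).diff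
    (isOpen_biUnion fun v _ => Metric.isOpen_ball)
  have hTpos : ∀ w ∈ T, 0 < 1 - ‖w‖ := by
    rintro w ⟨hw, hfar⟩
    have hw1 : ‖w‖ ≤ 1 :=
      mem_closedBall_zero_iff.1 (convexHull_min hV (convex_closedBall 0 1) hw)
    refine sub_pos.2 (hw1.lt_of_ne fun h => hfar ?_)
    exact Set.mem_biUnion (Finset.mem_filter.2 ⟨mem_of_mem_convexHull_of_norm_eq_one hV hw h, h⟩)
      (Metric.mem_ball_self hc)
  obtain ⟨ε, hε, hεT⟩ :=
    hT.exists_forall_le' (continuous_const.sub continuous_norm).continuousOn hTpos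
  refine ⟨ε, hε, fun w hw hwε => ?_⟩
  by_contra! hfar
  refine (hεT w ⟨hw, fun hmem => ?_⟩).not_gt hwε
  obtain ⟨v, hv, hwv⟩ := Set.mem_iUnion₂.1 hmem
  obtain ⟨hvV, hv1⟩ := Finset.mem_filter.1 hv
  exact (hfar v hvV hv1).not_gt (mem_ball_iff_norm.1 hwv)

theorem exists_norm_sub_le_mul_one_sub_norm {V : Finset ℂ}
    (hV : (V : Set ℂ) ⊆ Metric.closedBall 0 1) :
    ∃ M > 0, ∃ ε > 0, ∀ w ∈ convexHull ℝ (V : Set ℂ), 1 - ‖w‖ < ε →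
      ∃ v ∈ V, ‖v‖ = 1 ∧ ‖w - v‖ ≤ M * (1 - ‖w‖) := by
  obtain ⟨c, hc, hcone⟩ := exists_pos_mul_norm_sub_le_one_sub_re hV
  obtain ⟨ε, hε, hnear⟩ := exists_norm_sub_lt_of_one_sub_norm_lt hV hc
  refine ⟨2 / c, div_pos two_pos hc, ε, hε, fun w hw hwε => ?_⟩
  obtain ⟨v, hv, hv1, hwv⟩ := hnear w hw hwε
  refine ⟨v, hv, hv1, ?_⟩
  have hw1 : ‖w‖ ≤ 1 := mem_closedBall_zero_iff.1 (convexHull_min hV (convex_closedBall 0 1) hw)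
  have hcw := hcone v hv hv1 w hw
  have hid := two_mul_one_sub_re_mul_conj hv1 w
  rw [div_mul_eq_mul_div, le_div_iff₀ hc]
  nlinarith [norm_nonneg w, norm_nonneg (w - v)]

theorem tsum_ofReal_mul_pow_lt_top (c : ℝ) {r : ℝ} (hr0 : 0 ≤ r) (hr : r < 1) :
    ∑' n : ℕ, ENNReal.ofReal (c * r ^ n) < ⊤ := by
  simp_rw [ENNReal.ofReal_mul' (pow_nonneg hr0 _), ENNReal.ofReal_pow hr0, ENNReal.tsum_mul_left,
    ENNReal.tsum_geometric]
  exact ENNReal.mul_lt_top ENNReal.ofReal_lt_top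
    (ENNReal.inv_lt_top.2 (tsub_pos_of_lt (ENNReal.ofReal_lt_one.2 hr)))

def CarlesonBound (ν : Measure ℂ) (C s : ℝ) : Prop :=
  ∀ ξ : ℂ, ‖ξ‖ = 1 → ∀ h ∈ Set.Ioo (0 : ℝ) 1, ν (carlesonBox ξ h) ≤ ENNReal.ofReal (C * h ^ s)

def boundaryLayer (t : ℝ) : Set ℂ := {w : ℂ | ‖w‖ < 1 ∧ 1 - ‖w‖ ≤ t}

namespace CarlesonBound

variable {ν : Measure ℂ} {C s : ℝ}

theorem measure_biUnion_carlesonBox_le {T : Finset ℂ} (hν : CarlesonBound ν C s) (hs : 0 ≤ s)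
    (hT : ∀ ξ ∈ T, ‖ξ‖ = 1) {h : ℝ} (hh : h ∈ Set.Ioo (0 : ℝ) 1) :
    ν (⋃ ξ ∈ T, carlesonBox ξ h) ≤ T.card * ENNReal.ofReal C := by
  have hbox : ∀ ξ ∈ T, ν (carlesonBox ξ h) ≤ ENNReal.ofReal C := fun ξ hξ =>
    (hν ξ (hT ξ hξ) h hh).trans <| ENNReal.ofReal_le_ofReal_iff'.2 <| by
      rcases le_total C 0 with hC | hC
      · exact Or.inr (mul_nonpos_of_nonpos_of_nonneg hC (rpow_nonneg hh.1.le s))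
      · exact Or.inl (mul_le_of_le_one_right hC (rpow_le_one hh.1.le hh.2.le hs))
  calc ν (⋃ ξ ∈ T, carlesonBox ξ h) ≤ ∑ ξ ∈ T, ν (carlesonBox ξ h) := measure_biUnion_finset_le _ _
    _ ≤ ∑ _ξ ∈ T, ENNReal.ofReal C := Finset.sum_le_sum hbox
    _ = T.card * ENNReal.ofReal C := by rw [Finset.sum_const, nsmul_eq_mul]

theorem measure_ball_lt_top (hν : CarlesonBound ν C s) (hs : 0 ≤ s) (h0 : ν {0} = 0) :
    ν (Metric.ball 0 1) < ⊤ := by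
  obtain ⟨T, hT, hcover⟩ := exists_finset_carlesonBox_cover
  set R : ℕ → Set ℂ := fun k => {w : ℂ | w ≠ 0 ∧ ‖w‖ < 1 ∧ 2⁻¹ ^ (k + 1) ≤ ‖w‖}
  have hR : ∀ k, ν (R k) ≤ T.card * ENNReal.ofReal C := by
    intro k
    have hk : (2⁻¹ : ℝ) ^ (k + 1) ≤ 2⁻¹ :=
      pow_le_of_le_one (by norm_num) (by norm_num) k.succ_ne_zero
    have hk0 : (0 : ℝ) < 2⁻¹ ^ (k + 1) := by positivity
    refine (measure_mono ?_).trans <| hν.measure_biUnion_carlesonBox_le hs hT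
      (h := 1 - 2⁻¹ ^ (k + 1)) ⟨by linarith, by linarith⟩
    rintro w ⟨hw0, hw1, hwk⟩
    exact hcover _ (by linarith) ⟨hw0, hw1, by linarith⟩
  have hmono : Monotone R := monotone_nat_of_le_succ fun k w ⟨hw0, hw1, hwk⟩ =>
    ⟨hw0, hw1, le_trans (pow_le_pow_of_le_one (by norm_num) (by norm_num) k.succ.le_succ) hwk⟩
  have hball : Metric.ball 0 1 ⊆ {0} ∪ ⋃ k, R k := by
    intro w hw
    rcases eq_or_ne w 0 with rfl | hw0
    · exact Or.inl rfl
    obtain ⟨k, hk⟩ := exists_pow_lt_of_lt_one (norm_pos_iff.2 hw0) (by norm_num : (2⁻¹ : ℝ) < 1)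
    exact Or.inr <| Set.mem_iUnion.2 ⟨k, hw0, mem_ball_zero_iff.1 hw,
      (pow_le_pow_of_le_one (by norm_num) (by norm_num) k.le_succ).trans hk.le⟩
  calc ν (Metric.ball 0 1) ≤ ν {0} + ν (⋃ k, R k) :=
        (measure_mono hball).trans (measure_union_le _ _)
    _ = ⨆ k, ν (R k) := by rw [h0, zero_add, hmono.measure_iUnion]
    _ ≤ T.card * ENNReal.ofReal C := iSup_le hR
    _ < ⊤ := ENNReal.mul_lt_top (ENNReal.natCast_lt_top _) ENNReal.ofReal_lt_top

theorem measure_convexHull_inter_boundaryLayer_le (hν : CarlesonBound ν C s) {V : Finset ℂ}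
    (hV : (V : Set ℂ) ⊆ Metric.closedBall 0 1) :
    ∃ A : ℝ, ∃ ε > 0, ∀ t ∈ Set.Ioo 0 ε,
      ν (convexHull ℝ (V : Set ℂ) ∩ boundaryLayer t) ≤ ENNReal.ofReal (A * t ^ s) := by
  obtain ⟨M, hM, ε, hε, hnear⟩ := exists_norm_sub_le_mul_one_sub_norm hV
  set V₁ := V.filter (‖·‖ = 1)
  refine ⟨V₁.card * C * (π * M) ^ s, min ε (π * M)⁻¹, lt_min hε (by positivity), fun t ht => ?_⟩
  have hπM : 0 < π * M := by positivity
  have hh : π * M * t ∈ Set.Ioo (0 : ℝ) 1 := by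
    refine ⟨mul_pos hπM ht.1, ?_⟩
    have := mul_lt_mul_of_pos_left (ht.2.trans_le (min_le_right _ _)) hπM
    rwa [mul_inv_cancel₀ hπM.ne'] at this
  have hsub : convexHull ℝ (V : Set ℂ) ∩ boundaryLayer t ⊆ ⋃ v ∈ V₁, carlesonBox v (π * M * t) := by
    rintro w ⟨hwK, hw1, hwt⟩
    obtain ⟨v, hv, hv1, hwv⟩ := hnear w hwK (hwt.trans_lt (ht.2.trans_le (min_le_left _ _)))
    refine Set.mem_biUnion (Finset.mem_filter.2 ⟨hv, hv1⟩)
      (mem_carlesonBox_of_pi_mul_norm_sub_le hw1 hv1 ?_)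
    calc π * ‖w - v‖ ≤ π * (M * (1 - ‖w‖)) := by gcongr
      _ ≤ π * M * t := by rw [← mul_assoc]; gcongr
  calc ν (convexHull ℝ (V : Set ℂ) ∩ boundaryLayer t)
      ≤ ∑ v ∈ V₁, ν (carlesonBox v (π * M * t)) :=
        (measure_mono hsub).trans (measure_biUnion_finset_le _ _)
    _ ≤ ∑ _v ∈ V₁, ENNReal.ofReal (C * (π * M * t) ^ s) :=
        Finset.sum_le_sum fun v hv => hν v (Finset.mem_filter.1 hv).2 _ hh
    _ = ENNReal.ofReal (V₁.card * C * (π * M) ^ s * t ^ s) := by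
        rw [Finset.sum_const, nsmul_eq_mul, ← ENNReal.ofReal_natCast,
          ← ENNReal.ofReal_mul (Nat.cast_nonneg _), mul_rpow hπM.le ht.1.le]
        ring_nf

theorem exists_measure_convexHull_inter_boundaryLayer_le (hν : CarlesonBound ν C s) (hs : 0 ≤ s)
    (h0 : ν {0} = 0) {V : Finset ℂ} (hV : (V : Set ℂ) ⊆ Metric.closedBall 0 1) :
    ∃ A : ℝ, ∀ t > 0,
      ν (convexHull ℝ (V : Set ℂ) ∩ boundaryLayer t) ≤ ENNReal.ofReal (A * t ^ s) := by
  obtain ⟨A, ε, hε, hA⟩ := hν.measure_convexHull_inter_boundaryLayer_le hV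
  set m := (ν (Metric.ball 0 1)).toReal
  refine ⟨max A (m / ε ^ s), fun t ht => ?_⟩
  rcases lt_or_ge t ε with htε | htε
  · exact (hA t ⟨ht, htε⟩).trans <| ENNReal.ofReal_le_ofReal <|
      mul_le_mul_of_nonneg_right (le_max_left _ _) (rpow_nonneg ht.le s)
  · have hεs : 0 < ε ^ s := rpow_pos_of_pos hε s
    calc ν (convexHull ℝ (V : Set ℂ) ∩ boundaryLayer t) ≤ ν (Metric.ball 0 1) :=
          measure_mono fun w hw => mem_ball_zero_iff.2 hw.2.1
      _ = ENNReal.ofReal m := (ENNReal.ofReal_toReal (hν.measure_ball_lt_top hs h0).ne).symm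
      _ ≤ ENNReal.ofReal (m / ε ^ s * t ^ s) := by
          refine ENNReal.ofReal_le_ofReal ?_
          rw [div_mul_eq_mul_div, le_div_iff₀ hεs]
          exact mul_le_mul_of_nonneg_left (rpow_le_rpow hε.le htε hs) ENNReal.toReal_nonneg
      _ ≤ ENNReal.ofReal (max A (m / ε ^ s) * t ^ s) := ENNReal.ofReal_le_ofReal <|
          mul_le_mul_of_nonneg_right (le_max_right _ _) (rpow_nonneg ht.le s)

theorem setLIntegral_convexHull_inter_ball_lt_top {α : ℝ} (hν : CarlesonBound ν C (2 + α))
    (hα : 0 < α) (h0 : ν {0} = 0) {V : Finset ℂ} (hV : (V : Set ℂ) ⊆ Metric.closedBall 0 1) :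
    ∫⁻ w in convexHull ℝ (V : Set ℂ) ∩ Metric.ball 0 1,
      ENNReal.ofReal (((1 - ‖w‖ ^ 2) ^ 2)⁻¹) ∂ν < ⊤ := by
  obtain ⟨A, hA⟩ := hν.exists_measure_convexHull_inter_boundaryLayer_le (by linarith) h0 hV
  set K := convexHull ℝ (V : Set ℂ)
  set t : ℕ → ℝ := fun n => 2⁻¹ ^ n with ht
  set shell : ℕ → Set ℂ := fun n => K ∩ {w | ‖w‖ < 1 ∧ 1 - ‖w‖ ≤ t n ∧ t n / 2 < 1 - ‖w‖}
  have hcover : K ∩ Metric.ball 0 1 ⊆ ⋃ n, shell n := by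
    rintro w ⟨hwK, hw⟩
    rw [mem_ball_zero_iff] at hw
    obtain ⟨n, hn1, hn⟩ := exists_nat_pow_near_of_lt_one (sub_pos.2 hw)
      (by linarith [norm_nonneg w]) (by norm_num : (0 : ℝ) < 2⁻¹) (by norm_num)
    refine Set.mem_iUnion.2 ⟨n, hwK, hw, hn, ?_⟩
    rwa [pow_succ, ← div_eq_mul_inv] at hn1
  have hterm : ∀ n, ∫⁻ w in shell n, ENNReal.ofReal (((1 - ‖w‖ ^ 2) ^ 2)⁻¹) ∂ν ≤
      ENNReal.ofReal (4 * A * (2⁻¹ ^ α) ^ n) := by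
    intro n
    have htn : 0 < t n := by positivity
    have hbound : ∀ w ∈ shell n,
        ENNReal.ofReal (((1 - ‖w‖ ^ 2) ^ 2)⁻¹) ≤ ENNReal.ofReal (4 * (t n ^ 2)⁻¹) := by
      rintro w ⟨-, hw1, -, hwt⟩
      have : t n / 2 < 1 - ‖w‖ ^ 2 := by nlinarith [norm_nonneg w]
      refine ENNReal.ofReal_le_ofReal ?_
      calc ((1 - ‖w‖ ^ 2) ^ 2)⁻¹ ≤ ((t n / 2) ^ 2)⁻¹ := inv_anti₀ (by positivity) (by gcongr)
        _ = 4 * (t n ^ 2)⁻¹ := by ring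
    calc ∫⁻ w in shell n, ENNReal.ofReal (((1 - ‖w‖ ^ 2) ^ 2)⁻¹) ∂ν
        ≤ ∫⁻ _ in shell n, ENNReal.ofReal (4 * (t n ^ 2)⁻¹) ∂ν :=
          setLIntegral_mono measurable_const hbound
      _ = ENNReal.ofReal (4 * (t n ^ 2)⁻¹) * ν (shell n) := setLIntegral_const _ _
      _ ≤ ENNReal.ofReal (4 * (t n ^ 2)⁻¹) * ENNReal.ofReal (A * t n ^ (2 + α)) := by
          gcongr
          have hsub : shell n ⊆ K ∩ boundaryLayer (t n) := fun w hw => ⟨hw.1, hw.2.1, hw.2.2.1⟩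
          exact (measure_mono hsub).trans (hA _ htn)
      _ = ENNReal.ofReal (4 * A * (2⁻¹ ^ α) ^ n) := by
          rw [← ENNReal.ofReal_mul (by positivity), rpow_add htn, rpow_two, ht,
            rpow_pow_comm (by norm_num)]
          field_simp
  calc ∫⁻ w in K ∩ Metric.ball 0 1, ENNReal.ofReal (((1 - ‖w‖ ^ 2) ^ 2)⁻¹) ∂ν
      ≤ ∑' n, ∫⁻ w in shell n, ENNReal.ofReal (((1 - ‖w‖ ^ 2) ^ 2)⁻¹) ∂ν :=
        (lintegral_mono_set hcover).trans (lintegral_iUnion_le _ _)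
    _ ≤ ∑' n, ENNReal.ofReal (4 * A * (2⁻¹ ^ α) ^ n) := ENNReal.tsum_le_tsum hterm
    _ < ⊤ :=
        tsum_ofReal_mul_pow_lt_top _ (by positivity) (rpow_lt_one (by norm_num) (by norm_num) hα)

end CarlesonBound

theorem stmt15_general (α : ℝ) (hα : α ∈ Set.Ioc (0:ℝ) 1) (φ : ℂ → ℂ)
    (N : ℂ → ENNReal) (hNmeas : Measurable N)
    -- `N = N_{φ,α}` via the change-of-variables identity
    (hchg : ∀ g : ℂ → ENNReal, Measurable g →
      (∫⁻ z in Metric.ball (0:ℂ) 1,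
          g (φ z) * ENNReal.ofReal (‖deriv φ z‖^2 * (1 - ‖z‖^2) ^ α))
        = ∫⁻ w in Metric.ball (0:ℂ) 1, g w * N w)
    -- Carleson box condition (boundedness of `C_φ` on `D_α`)
    (hcar : ∃ C : ℝ, 0 < C ∧ ∀ ξ : ℂ, ‖ξ‖ = 1 → ∀ h ∈ Set.Ioo (0:ℝ) 1,
      (∫⁻ w in {z : ℂ | ‖z‖ < 1 ∧ 1 - h ≤ ‖z‖ ∧
          |Complex.arg (z * (starRingEnd ℂ) ξ)| ≤ h}, N w)
        ≤ ENNReal.ofReal (C * h ^ (2 + α)))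
    -- the image of `φ` is contained in a polygon inscribed in the closed unit disc
    (hpoly : ∃ V : Finset ℂ, (∀ v ∈ V, ‖v‖ ≤ 1) ∧
      ∀ z ∈ Metric.ball (0:ℂ) 1, φ z ∈ convexHull ℝ (V : Set ℂ)) :
    (∫⁻ z in Metric.ball (0:ℂ) 1,
        ENNReal.ofReal (‖deriv φ z‖^2 / (1 - ‖φ z‖^2)^2 *
          ((1 + α) * (1 - ‖z‖^2) ^ α / π))) < ⊤ := by
  obtain ⟨C, -, hcar⟩ := hcar
  obtain ⟨V, hV, hφV⟩ := hpoly
  set K := convexHull ℝ (V : Set ℂ)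
  set g : ℂ → ENNReal := fun w => ENNReal.ofReal (((1 - ‖w‖ ^ 2) ^ 2)⁻¹)
  have hg : Measurable g := by fun_prop
  have hK : MeasurableSet K := (V.finite_toSet.isCompact_convexHull (𝕜 := ℝ)).isClosed.measurableSet
  have hintegrand : ∀ z ∈ Metric.ball (0:ℂ) 1,
      ENNReal.ofReal (‖deriv φ z‖^2 / (1 - ‖φ z‖^2)^2 * ((1 + α) * (1 - ‖z‖^2) ^ α / π)) =
        ENNReal.ofReal ((1 + α) / π) *
          (K.indicator g (φ z) * ENNReal.ofReal (‖deriv φ z‖^2 * (1 - ‖z‖^2) ^ α)) := by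
    intro z hz
    rw [Set.indicator_of_mem (hφV z hz), ← ENNReal.ofReal_mul (by positivity),
      ← ENNReal.ofReal_mul (div_nonneg (by linarith [hα.1]) pi_pos.le)]
    congr 1
    ring
  have hpush : ∫⁻ w in Metric.ball 0 1, K.indicator g w * N w =
      ∫⁻ w in K ∩ Metric.ball 0 1, g w ∂volume.withDensity N := by
    rw [setLIntegral_withDensity_eq_setLIntegral_mul _ hNmeas hg (hK.inter measurableSet_ball),
      ← Measure.restrict_restrict hK, ← lintegral_indicator hK]
    refine lintegral_congr fun w => ?_
    by_cases hw : w ∈ K <;> simp [hw, mul_comm]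
  have hν : CarlesonBound (volume.withDensity N) C (2 + α) := fun ξ hξ h hh =>
    (withDensity_apply' N _).trans_le (hcar ξ hξ h hh)
  rw [setLIntegral_congr_fun measurableSet_ball hintegrand,
    lintegral_const_mul' _ _ ENNReal.ofReal_ne_top, hchg _ (hg.indicator hK), hpush]
  exact ENNReal.mul_lt_top ENNReal.ofReal_lt_top <|
    hν.setLIntegral_convexHull_inter_ball_lt_top hα.1
      (withDensity_absolutelyContinuous _ _ (measure_singleton 0))
      fun v hv => mem_closedBall_zero_iff.2 (hV v hv)

/-- If `φ` is a holomorphic self-map of `𝔻` whose image lies in a closed polygon inscribed in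
the closed unit disc, and `C_φ` is bounded on `D_α` (`0 < α ≤ 1`) in the sense of the Carleson
box condition `μ_{φ,α}(W(ξ,h)) = O(h^{2+α})` for the weighted counting measure `N dA`, then
`∫_𝔻 |φ'(z)|²/(1-|φ(z)|²)² dA_α(z) < ∞`. -/
theorem stmt15 (α : ℝ) (hα : α ∈ Set.Ioc (0:ℝ) 1) (φ : ℂ → ℂ)
    (hφ : DifferentiableOn ℂ φ (Metric.ball (0:ℂ) 1))
    (hφself : ∀ z ∈ Metric.ball (0:ℂ) 1, φ z ∈ Metric.ball (0:ℂ) 1)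
    (N : ℂ → ENNReal) (hNmeas : Measurable N)
    -- `N = N_{φ,α}` via the change-of-variables identity
    (hchg : ∀ g : ℂ → ENNReal, Measurable g →
      (∫⁻ z in Metric.ball (0:ℂ) 1,
          g (φ z) * ENNReal.ofReal (‖deriv φ z‖^2 * (1 - ‖z‖^2) ^ α))
        = ∫⁻ w in Metric.ball (0:ℂ) 1, g w * N w)
    -- Carleson box condition (boundedness of `C_φ` on `D_α`)
    (hcar : ∃ C : ℝ, 0 < C ∧ ∀ ξ : ℂ, ‖ξ‖ = 1 → ∀ h ∈ Set.Ioo (0:ℝ) 1,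
      (∫⁻ w in {z : ℂ | ‖z‖ < 1 ∧ 1 - h ≤ ‖z‖ ∧
          |Complex.arg (z * (starRingEnd ℂ) ξ)| ≤ h}, N w)
        ≤ ENNReal.ofReal (C * h ^ (2 + α)))
    -- the image of `φ` is contained in a polygon inscribed in the closed unit disc
    (hpoly : ∃ V : Finset ℂ, (∀ v ∈ V, ‖v‖ ≤ 1) ∧
      ∀ z ∈ Metric.ball (0:ℂ) 1, φ z ∈ convexHull ℝ (V : Set ℂ)) :
    (∫⁻ z in Metric.ball (0:ℂ) 1,
        ENNReal.ofReal (‖deriv φ z‖^2 / (1 - ‖φ z‖^2)^2 *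
          ((1 + α) * (1 - ‖z‖^2) ^ α / π))) < ⊤ :=
  stmt15_general α hα φ N hNmeas hchg hcar hpoly
end
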